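/- arXiv:1909.02593 — 2 statements merged into one kernel-verified Lean document; each statement's English description precedes it below -/
import Mathlib

section
/- For every n ≥ 3, the Lucas atom P_n(s,t) over ℂ factors as a product of φ(n)/2 factors of the form s² + a t with a = 2b+2 > 0, where b ranges over the real parts of the primitive n-th roots of unity (taken in conjugate pairs). -/
/-!
Both sides are weighted homogeneous of degree `φ(n)` for the weights `(1, 2)` on `(s, t)`, and
the substitution `s = 1 + q`, `t = -q` is injective on such polynomials: in a weighted
homogeneous polynomial the monomial of least `t`-degree `j` is unique, and it alone contributes
to the coefficient of `q ^ j`. So it suffices to compare images under the substitution. For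
`n ≥ 3` no primitive `n`-th root of unity is real, so pairing each root `ζ` with `Im ζ > 0` with
its conjugate gives `Φ_n(q) = ∏ (q - ζ)(q - ζ̄) = ∏ ((1 + q)² - (2 Re ζ + 2) q)`.
-/

open MvPolynomial

theorem Polynomial.coeff_one_add_X_pow_mul_neg_X_pow_of_le {R : Type*} [CommRing R] (a : ℕ)
    {b j : ℕ} (hj : j ≤ b) :
    ((1 + X) ^ a * (-X) ^ b : Polynomial R).coeff j = if j = b then (-1) ^ b else 0 := by
  rw [neg_pow, show (-1 : Polynomial R) ^ b = C ((-1) ^ b) by simp, mul_left_comm, coeff_C_mul,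
    coeff_mul_X_pow']
  split_ifs with h₁ h₂ h₂ <;> first | omega | simp [h₂, coeff_zero_eq_eval_zero]

theorem Finsupp.weight_one_two (m : Fin 2 →₀ ℕ) : weight ![1, 2] m = m 0 + 2 * m 1 := by
  simp [weight_eq_sum, Fin.sum_univ_two, mul_comm]

theorem MvPolynomial.IsWeightedHomogeneous.map {R S σ M : Type*} [CommSemiring R]
    [CommSemiring S] [AddCommMonoid M] {w : σ → M} {φ : MvPolynomial σ R} {d : M}
    (hφ : IsWeightedHomogeneous w φ d) (f : R →+* S) :
    IsWeightedHomogeneous w (MvPolynomial.map f φ) d := fun m hm =>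
  hφ fun h => hm (by rw [coeff_map, h, map_zero])

namespace MvPolynomial

section LucasSubstitution

variable {R : Type*} [CommRing R]

local notation "lucasSubst" => (![1 + Polynomial.X, -Polynomial.X] : Fin 2 → Polynomial R)

theorem isWeightedHomogeneous_X_zero_sq_add_C_mul_X_one (a : R) :
    IsWeightedHomogeneous ![1, 2] (X 0 ^ 2 + C a * X 1 : MvPolynomial (Fin 2) R) 2 :=
  ((isWeightedHomogeneous_X R ![1, 2] 0).pow 2).add ((isWeightedHomogeneous_X R _ 1).C_mul a)

theorem aeval_lucasSubst_eq_sum (φ : MvPolynomial (Fin 2) R) :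
    aeval lucasSubst φ = ∑ m ∈ φ.support,
      Polynomial.C (φ.coeff m) * ((1 + Polynomial.X) ^ m 0 * (-Polynomial.X) ^ m 1) := by
  rw [aeval_def, eval₂_eq']
  simp [Fin.prod_univ_two, Polynomial.algebraMap_eq]

theorem eq_zero_of_aeval_lucasSubst_eq_zero {φ : MvPolynomial (Fin 2) R} {d : ℕ}
    (hφ : IsWeightedHomogeneous ![1, 2] φ d) (h : aeval lucasSubst φ = 0) : φ = 0 := by
  by_contra hne
  obtain ⟨m₀, hm₀, hmin⟩ := φ.support.exists_min_image (· 1) (support_nonempty.2 hne)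
  have hunique : ∀ m ∈ φ.support, m 1 = m₀ 1 → m = m₀ := by
    intro m hm hm1
    have hw := (hφ (mem_support_iff.1 hm)).trans (hφ (mem_support_iff.1 hm₀)).symm
    rw [Finsupp.weight_one_two, Finsupp.weight_one_two] at hw
    ext i
    fin_cases i <;> simp <;> omega
  have hcoeff : (aeval lucasSubst φ).coeff (m₀ 1) = (-1) ^ m₀ 1 * φ.coeff m₀ := by
    rw [aeval_lucasSubst_eq_sum, Polynomial.finsetSum_coeff,
      Finset.sum_eq_single_of_mem m₀ hm₀]
    · simp [Polynomial.coeff_C_mul, Polynomial.coeff_one_add_X_pow_mul_neg_X_pow_of_le, mul_comm]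
    · intro m hm hne
      rw [Polynomial.coeff_C_mul, Polynomial.coeff_one_add_X_pow_mul_neg_X_pow_of_le _ (hmin m hm),
        if_neg fun h => hne (hunique m hm h.symm), mul_zero]
  rw [h, Polynomial.coeff_zero, eq_comm, neg_one_pow_mul_eq_zero_iff] at hcoeff
  exact mem_support_iff.1 hm₀ hcoeff

theorem eq_of_aeval_lucasSubst_eq {φ ψ : MvPolynomial (Fin 2) R} {d : ℕ}
    (hφ : IsWeightedHomogeneous ![1, 2] φ d) (hψ : IsWeightedHomogeneous ![1, 2] ψ d)
    (h : aeval lucasSubst φ = aeval lucasSubst ψ) : φ = ψ :=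
  sub_eq_zero.1 <|
    eq_zero_of_aeval_lucasSubst_eq_zero (hφ.sub hψ) (by rw [map_sub, h, sub_self])

end LucasSubstitution

end MvPolynomial

namespace Finset

variable {S : Finset ℂ}

theorem image_conj_filter_im_pos (hconj : ∀ z ∈ S, starRingEnd ℂ z ∈ S)
    (hreal : ∀ z ∈ S, z.im ≠ 0) :
    {z ∈ S | 0 < z.im}.image (starRingEnd ℂ) = {z ∈ S | ¬0 < z.im} := by
  ext z
  simp only [mem_image, mem_filter, not_lt]
  constructor
  · rintro ⟨w, ⟨hw, hw_im⟩, rfl⟩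
    exact ⟨hconj w hw, by simpa using hw_im.le⟩
  · rintro ⟨hz, hz_im⟩
    refine ⟨starRingEnd ℂ z, ⟨hconj z hz, ?_⟩, by simp⟩
    simpa using lt_of_le_of_ne hz_im (hreal z hz)

theorem card_eq_two_mul_card_filter_im_pos (hconj : ∀ z ∈ S, starRingEnd ℂ z ∈ S)
    (hreal : ∀ z ∈ S, z.im ≠ 0) : #S = 2 * #{z ∈ S | 0 < z.im} := by
  rw [← card_filter_add_card_filter_not (fun z => 0 < z.im),
    ← image_conj_filter_im_pos hconj hreal, card_image_of_injective _ (starRingEnd ℂ).injective]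
  ring

theorem prod_eq_prod_filter_im_pos_mul_conj {M : Type*} [CommMonoid M]
    (hconj : ∀ z ∈ S, starRingEnd ℂ z ∈ S) (hreal : ∀ z ∈ S, z.im ≠ 0) (f : ℂ → M) :
    ∏ z ∈ S, f z = ∏ z ∈ S with 0 < z.im, f z * f (starRingEnd ℂ z) := by
  rw [← prod_filter_mul_prod_filter_not S (fun z => 0 < z.im),
    ← image_conj_filter_im_pos hconj hreal, prod_image (starRingEnd ℂ).injective.injOn,
    prod_mul_distrib]

end Finset

namespace IsPrimitiveRoot

variable {ζ : ℂ} {n : ℕ}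

theorem im_ne_zero (h : IsPrimitiveRoot ζ n) (hn : 3 ≤ n) : ζ.im ≠ 0 := by
  intro him
  have hconj : starRingEnd ℂ ζ = ζ := Complex.conj_eq_iff_im.mpr him
  have hsq : ζ ^ 2 = 1 := by
    calc ζ ^ 2 = ζ * starRingEnd ℂ ζ := by rw [hconj, sq]
      _ = 1 := by simp [Complex.mul_conj', h.norm'_eq_one (by omega)]
  have := Nat.le_of_dvd two_pos (h.dvd_of_pow_eq_one 2 hsq)
  omega

theorem neg_one_lt_re (h : IsPrimitiveRoot ζ n) (hn : 3 ≤ n) : -1 < ζ.re := by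
  have hnorm : ζ.re ^ 2 + ζ.im ^ 2 = 1 := by
    have := Complex.sq_norm ζ
    rw [h.norm'_eq_one (by omega), Complex.normSq_apply] at this
    linear_combination -this
  nlinarith [sq_pos_of_ne_zero (h.im_ne_zero hn)]

end IsPrimitiveRoot

namespace Polynomial

theorem X_sub_C_mul_X_sub_C_conj {z : ℂ} (hz : ‖z‖ = 1) :
    (X - C z) * (X - C (starRingEnd ℂ z)) = (1 + X) ^ 2 - C (2 * (z.re : ℂ) + 2) * X := by
  have hsum : C z + C (starRingEnd ℂ z) = C (2 * (z.re : ℂ)) := by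
    rw [← C_add, Complex.add_conj, Complex.ofReal_mul, Complex.ofReal_ofNat]
  have hprod : C z * C (starRingEnd ℂ z) = 1 := by
    rw [← C_mul, Complex.mul_conj', hz]
    simp
  simp only [C_add, C_ofNat] at hsum ⊢
  linear_combination (-X) * hsum + hprod

open Finset in
theorem cyclotomic_complex_eq_prod_conj_pairs {n : ℕ} (hn : 3 ≤ n) :
    ∃ ζ : Fin (n.totient / 2) → ℂ, (∀ i, IsPrimitiveRoot (ζ i) n) ∧
      cyclotomic n ℂ = ∏ i, (X - C (ζ i)) * (X - C (starRingEnd ℂ (ζ i))) := by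
  have hn0 : 0 < n := by omega
  set S := primitiveRoots n ℂ
  have hconj : ∀ z ∈ S, starRingEnd ℂ z ∈ S := fun z hz => (mem_primitiveRoots hn0).2 <|
    ((mem_primitiveRoots hn0).1 hz).map_of_injective (starRingEnd ℂ).injective
  have hreal : ∀ z ∈ S, z.im ≠ 0 := fun z hz => ((mem_primitiveRoots hn0).1 hz).im_ne_zero hn
  have hcard : #{z ∈ S | 0 < z.im} = n.totient / 2 := by
    have := card_eq_two_mul_card_filter_im_pos hconj hreal
    rw [Complex.card_primitiveRoots] at this
    omega
  let e := equivFinOfCardEq hcard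
  refine ⟨fun i => e.symm i, fun i => (mem_primitiveRoots hn0).1 (mem_filter.1 (e.symm i).2).1, ?_⟩
  rw [cyclotomic_eq_prod_X_sub_primitiveRoots (Complex.isPrimitiveRoot_exp n hn0.ne'),
    prod_eq_prod_filter_im_pos_mul_conj hconj hreal, ← prod_coe_sort]
  exact (e.symm.prod_comp fun z => (X - C (z : ℂ)) * (X - C (starRingEnd ℂ z))).symm

end Polynomial

theorem lucas_atom_factors (n : ℕ) (hn : 3 ≤ n) (P : MvPolynomial (Fin 2) ℤ)
    (hform : ∀ m : Fin 2 →₀ ℕ, P.coeff m ≠ 0 → m 0 + 2 * m 1 = Nat.totient n)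
    (heval : MvPolynomial.aeval ![1 + Polynomial.X, -Polynomial.X] P =
      Polynomial.cyclotomic n ℤ) :
    ∃ ζ : Fin (Nat.totient n / 2) → ℂ,
      (∀ i, IsPrimitiveRoot (ζ i) n) ∧
      MvPolynomial.map (Int.castRingHom ℂ) P =
        ∏ i, (X 0 ^ 2 + C (2 * (ζ i).re + 2 : ℂ) * X 1) ∧
      ∀ i, (0 : ℝ) < 2 * (ζ i).re + 2 := by
  obtain ⟨ζ, hprim, hcyc⟩ := Polynomial.cyclotomic_complex_eq_prod_conj_pairs hn
  refine ⟨ζ, hprim, ?_, fun i => by linarith [(hprim i).neg_one_lt_re hn]⟩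
  have hP : IsWeightedHomogeneous ![1, 2] P n.totient := fun m hm => by
    rw [Finsupp.weight_one_two]
    exact hform m hm
  have hfactors : IsWeightedHomogeneous ![1, 2]
      (∏ i, (X 0 ^ 2 + C (2 * (ζ i).re + 2 : ℂ) * X 1)) n.totient := by
    have := IsWeightedHomogeneous.prod Finset.univ _ (fun _ => 2) fun i _ =>
      isWeightedHomogeneous_X_zero_sq_add_C_mul_X_one (2 * (ζ i).re + 2 : ℂ)
    rwa [Finset.sum_const, Finset.card_univ, Fintype.card_fin, smul_eq_mul,
      Nat.div_mul_cancel (Nat.totient_even (by omega)).two_dvd] at this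
  have hP_eval : aeval (![1 + Polynomial.X, -Polynomial.X] : Fin 2 → Polynomial ℂ) P =
      Polynomial.cyclotomic n ℂ := by
    rw [← Polynomial.map_cyclotomic_int, ← heval, ← algebraMap_int_eq,
      ← Polynomial.mapAlg_eq_map, comp_aeval_apply]
    congr
    funext i
    fin_cases i <;> simp [Polynomial.mapAlg_eq_map]
  refine eq_of_aeval_lucasSubst_eq (hP.map _) hfactors ?_
  rw [← algebraMap_int_eq, aeval_map_algebraMap, hP_eval, hcyc, map_prod]
  refine Finset.prod_congr rfl fun i _ => ?_
  rw [Polynomial.X_sub_C_mul_X_sub_C_conj ((hprim i).norm'_eq_one (by omega))]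
  simp [sub_eq_add_neg]
end

section
/- For 0 ≤ k ≤ n, the Lucanomial {n choose k} := {n}!/({k}!{n-k}!) is a polynomial in s and t with nonnegative integer coefficients. -/
open MvPolynomial

noncomputable def lucas : ℕ → MvPolynomial (Fin 2) ℤ
  | 0 => 0
  | 1 => 1
  | (n+2) => X 0 * lucas (n+1) + X 1 * lucas n

def Nn (f : MvPolynomial (Fin 2) ℤ) : Prop := ∀ m, 0 ≤ f.coeff m

lemma Nn.add {f g} (hf : Nn f) (hg : Nn g) : Nn (f + g) := fun m => by
  rw [coeff_add]; exact add_nonneg (hf m) (hg m)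

lemma Nn.mul {f g} (hf : Nn f) (hg : Nn g) : Nn (f * g) := fun m => by
  classical
  rw [coeff_mul]
  exact Finset.sum_nonneg fun x _ => mul_nonneg (hf _) (hg _)

lemma Nn.one : Nn 1 := fun m => by
  classical
  rw [coeff_one]; split <;> simp

lemma Nn.zero : Nn 0 := fun m => by simp

lemma Nn.X (i : Fin 2) : Nn (X i) := fun m => by
  classical
  rw [coeff_X']; split <;> simp

lemma lucas_nn : ∀ n, Nn (lucas n)
  | 0 => Nn.zero
  | 1 => Nn.one
  | (n+2) => by
    rw [show lucas (n+2) = X 0 * lucas (n+1) + X 1 * lucas n from rfl]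
    exact ((Nn.X 0).mul (lucas_nn (n+1))).add ((Nn.X 1).mul (lucas_nn n))

lemma lucas_add (m n : ℕ) :
    lucas (m + n + 1) = lucas (m+1) * lucas (n+1) + X 1 * lucas m * lucas n := by
  induction n using Nat.twoStepInduction with
  | zero => simp [lucas]
  | one =>
    show lucas (m + 2) = _
    rw [show lucas 2 = X 0 * lucas 1 + X 1 * lucas 0 from rfl]
    simp [lucas]; ring
  | more n ih1 ih2 =>
    have e : m + (n+2) + 1 = (m + n + 1) + 2 := by omega
    rw [e, show lucas ((m+n+1)+2) = X 0 * lucas (m+n+2) + X 1 * lucas (m+n+1) from rfl,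
      show (m:ℕ) + n + 2 = m + (n+1) + 1 from by omega, ih2, ih1,
      show lucas (n+3) = X 0 * lucas (n+2) + X 1 * lucas (n+1) from rfl,
      show lucas (n+2) = X 0 * lucas (n+1) + X 1 * lucas n from rfl]
    ring

noncomputable def B : ℕ → ℕ → MvPolynomial (Fin 2) ℤ
  | _, 0 => 1
  | 0, _+1 => 0
  | n+1, k+1 =>
    if n = k then 1
    else lucas (k+2) * B n (k+1) + X 1 * lucas (n - (k+1)) * B n k

lemma Nn.B (n k : ℕ) : Nn (B n k) := by
  induction n generalizing k with
  | zero => cases k <;> simp [_root_.B, Nn.one, Nn.zero]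
  | succ n ih =>
    cases k with
    | zero => simpa [_root_.B] using Nn.one
    | succ k =>
      rw [_root_.B]
      split
      · exact Nn.one
      · exact (((lucas_nn _).mul (ih _))).add (((Nn.X 1).mul (lucas_nn _)).mul (ih _))

lemma B_mul (n k : ℕ) (hk : k ≤ n) :
    B n k * (∏ i ∈ Finset.Icc 1 k, lucas i) * (∏ i ∈ Finset.Icc 1 (n - k), lucas i)
      = ∏ i ∈ Finset.Icc 1 n, lucas i := by
  induction n generalizing k with
  | zero =>
    interval_cases k
    simp [B]
  | succ n ih =>
    match k with
    | 0 => simp [B]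
    | k + 1 =>
      by_cases h : n = k
      · subst h
        simp [B]
      · have hk' : k + 1 ≤ n := by omega
        rw [B, if_neg h]
        have h1 : (∏ i ∈ Finset.Icc 1 (k+1), lucas i)
            = (∏ i ∈ Finset.Icc 1 k, lucas i) * lucas (k+1) :=
          Finset.prod_Icc_succ_top (by omega) _
        have h2 : n + 1 - (k+1) = (n - (k+1)) + 1 := by omega
        have h3 : (∏ i ∈ Finset.Icc 1 ((n - (k+1)) + 1), lucas i)
            = (∏ i ∈ Finset.Icc 1 (n - (k+1)), lucas i) * lucas (n - (k+1) + 1) :=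
          Finset.prod_Icc_succ_top (by omega) _
        have h4 : (∏ i ∈ Finset.Icc 1 (n+1), lucas i)
            = (∏ i ∈ Finset.Icc 1 n, lucas i) * lucas (n+1) :=
          Finset.prod_Icc_succ_top (by omega) _
        have ih1 := ih (k+1) hk'
        have ih2 := ih k (by omega)
        have hnk : n - k = (n - (k+1)) + 1 := by omega
        rw [hnk] at ih2
        have key : lucas (n + 1)
            = lucas (k+2) * lucas (n - (k+1) + 1) + X 1 * lucas (k+1) * lucas (n - (k+1)) := by
          have := lucas_add (k+1) (n - (k+1))
          rwa [show k + 1 + (n - (k+1)) + 1 = n + 1 from by omega] at this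
        rw [h2, h3, h4, key, h1]
        rw [h1] at ih1
        rw [h3] at ih2
        linear_combination (lucas (k+2) * lucas (n - (k+1) + 1)) * ih1 + (X 1 * lucas (k+1) * lucas (n - (k+1))) * ih2

theorem lucanomial_nonneg (n k : ℕ) (hk : k ≤ n) :
    ∃ f : MvPolynomial (Fin 2) ℤ,
      (∀ m : Fin 2 →₀ ℕ, 0 ≤ f.coeff m) ∧
      f * (∏ i ∈ Finset.Icc 1 k, lucas i) * (∏ i ∈ Finset.Icc 1 (n - k), lucas i) =
        ∏ i ∈ Finset.Icc 1 n, lucas i := by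
  exact ⟨B n k, Nn.B n k, B_mul n k hk⟩
end
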